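/- arXiv:1205.1315 — 7 statements merged into one kernel-verified Lean document; each statement's English description precedes it below -/
import Mathlib

section
/- If f: F(T) → ℝ is completely alternating on the nonempty finite subsets of T and nonnegative there, then f satisfies the triangle inequality f(A ∪ B) ≤ f(A ∪ C) + f(C ∪ B) for all nonempty finite subsets A, B, C of T. -/
/-!
Complete alternation of order one makes `f` monotone and of order two makes it submodular:
`f C + f (C ∪ A ∪ B) ≤ f (C ∪ A) + f (C ∪ B)`. Hence
`f (A ∪ B) ≤ f (C ∪ A ∪ B) ≤ f (C ∪ A) + f (C ∪ B) - f C`, and `f C ≥ 0` finishes.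
-/

/-- `f` is completely alternating on the semigroup of *nonempty* finite subsets of `T`:
all iterated differences `Δ_{K₁} ⋯ Δ_{Kₙ} f (K) ≤ 0` for `n ≥ 1` and nonempty finite
`K, K₁, …, Kₙ`. -/
def CompletelyAlternatingNE {T : Type*} [DecidableEq T] (f : Finset T → ℝ) : Prop :=
  ∀ (n : ℕ), 1 ≤ n → ∀ (K : Finset T), K.Nonempty →
    ∀ (Ks : Fin n → Finset T), (∀ i, (Ks i).Nonempty) →
      ∑ I : Finset (Fin n), (-1 : ℝ) ^ I.card * f (K ∪ I.sup Ks) ≤ 0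

namespace CompletelyAlternatingNE

variable {T : Type*} [DecidableEq T] {f : Finset T → ℝ}

theorem le_union (hf : CompletelyAlternatingNE f) {K L : Finset T} (hK : K.Nonempty)
    (hL : L.Nonempty) : f K ≤ f (K ∪ L) := by
  have h := hf 1 le_rfl K hK (fun _ => L) (fun _ => hL)
  have huniv : (Finset.univ : Finset (Finset (Fin 1))) = {∅, {0}} := by decide
  rw [huniv, Finset.sum_pair (by decide)] at h
  simp only [Finset.card_empty, pow_zero, one_mul, Finset.sup_empty, Finset.bot_eq_empty,
    Finset.union_empty, Finset.card_singleton, pow_one, neg_one_mul, Finset.sup_singleton] at h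
  linarith

theorem add_le_add_union (hf : CompletelyAlternatingNE f) {K L M : Finset T}
    (hK : K.Nonempty) (hL : L.Nonempty) (hM : M.Nonempty) :
    f K + f (K ∪ (L ∪ M)) ≤ f (K ∪ L) + f (K ∪ M) := by
  have h := hf 2 one_le_two K hK ![L, M] (Fin.forall_fin_two.2 ⟨hL, hM⟩)
  have huniv : (Finset.univ : Finset (Finset (Fin 2))) = {∅, {0}, {1}, {0, 1}} := by decide
  rw [huniv, Finset.sum_insert (by decide), Finset.sum_insert (by decide),
    Finset.sum_pair (by decide)] at h
  simp only [Finset.card_empty, pow_zero, Finset.sup_empty, Finset.bot_eq_empty,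
    Finset.union_empty, one_mul, Finset.card_singleton, pow_one, Finset.sup_singleton,
    Matrix.cons_val_zero, neg_mul, Matrix.cons_val_one, Matrix.cons_val_fin_one,
    Finset.mem_singleton, zero_ne_one, not_false_eq_true, Finset.card_insert_of_notMem,
    Nat.reduceAdd, even_two, Even.neg_pow, one_pow, Finset.sup_insert, Finset.sup_eq_union'] at h
  linarith

end CompletelyAlternatingNE

/-- If `f` is completely alternating on the nonempty finite subsets of `T` and nonnegative
there, then `f` satisfies the triangle inequality
`f(A ∪ B) ≤ f(A ∪ C) + f(C ∪ B)` for all nonempty finite `A, B, C ⊆ T`. -/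
theorem triangle_of_completelyAlternating_nonneg {T : Type*} [DecidableEq T]
    (f : Finset T → ℝ) (hCA : CompletelyAlternatingNE f)
    (hnn : ∀ A : Finset T, A.Nonempty → 0 ≤ f A)
    (A B C : Finset T) (hA : A.Nonempty) (hB : B.Nonempty) (hC : C.Nonempty) :
    f (A ∪ B) ≤ f (A ∪ C) + f (C ∪ B) := by
  have hmono : f (A ∪ B) ≤ f (C ∪ (A ∪ B)) := by
    rw [Finset.union_comm C]
    exact hCA.le_union (hA.mono Finset.subset_union_left) hC
  have hsub := hCA.add_le_add_union hC hA hB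
  rw [Finset.union_comm C A] at hsub
  linarith [hnn C hC]
end

section
/- The coefficients τ^M_L := ∑_{I ⊆ L} (−1)^{|I|+1} θ((M∖L) ∪ I) satisfy the consistency relation τ^M_L = τ^{M∪{t}}_L + τ^{M∪{t}}_{L∪{t}} for every nonempty finite M ⊆ T, nonempty L ⊆ M, and t ∈ T ∖ M. -/
/-- `τ^M_L = ∑_{I ⊆ L} (−1)^{|I|+1} θ((M∖L) ∪ I)`. -/
def tauCoeff {T : Type*} [DecidableEq T] (θ : Finset T → ℝ) (M L : Finset T) : ℝ :=
  ∑ I ∈ L.powerset, (-1 : ℝ) ^ (I.card + 1) * θ ((M \ L) ∪ I)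

/-! Splitting the subsets of `L ∪ {t}` according to whether they contain `t` pairs `I` with
`I ∪ {t}`; the two members of a pair carry opposite signs. Hence
`τ^{M∪{t}}_{L∪{t}} = ∑_{I ⊆ L} (−1)^{|I|+1} (θ((M∖L) ∪ I) − θ((M∖L) ∪ {t} ∪ I)) = τ^M_L − τ^{M∪{t}}_L`. -/

theorem Finset.sum_powerset_insert_neg_one_pow {α R : Type*} [DecidableEq α] [CommRing R]
    {L : Finset α} {t : α} (htL : t ∉ L) (g : Finset α → R) :
    ∑ I ∈ (insert t L).powerset, (-1 : R) ^ (I.card + 1) * g I =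
      ∑ I ∈ L.powerset, (-1 : R) ^ (I.card + 1) * (g I - g (insert t I)) := by
  rw [Finset.sum_powerset_insert htL, ← Finset.sum_add_distrib]
  refine Finset.sum_congr rfl fun I hI => ?_
  have htI : t ∉ I := fun h => htL (Finset.mem_powerset.mp hI h)
  rw [Finset.card_insert_of_notMem htI]
  ring

theorem tauCoeff_insert_insert {T : Type*} [DecidableEq T] (θ : Finset T → ℝ)
    {M L : Finset T} {t : T} (htM : t ∉ M) (htL : t ∉ L) :
    tauCoeff θ (insert t M) (insert t L) = tauCoeff θ M L - tauCoeff θ (insert t M) L := by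
  have hdiff : insert t M \ insert t L = M \ L := by
    rw [Finset.insert_sdiff_insert, Finset.sdiff_insert_of_notMem htM]
  have hunion (I : Finset T) : M \ L ∪ insert t I = insert t M \ L ∪ I := by
    rw [Finset.insert_sdiff_of_notMem _ htL, Finset.insert_union, Finset.union_insert]
  simp only [tauCoeff, hdiff, Finset.sum_powerset_insert_neg_one_pow htL, hunion, mul_sub,
    Finset.sum_sub_distrib]

theorem tauCoeff_consistency_general {T : Type*} [DecidableEq T] (θ : Finset T → ℝ)
    (M L : Finset T) (hLM : L ⊆ M)
    (t : T) (ht : t ∉ M) :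
    tauCoeff θ M L = tauCoeff θ (insert t M) L + tauCoeff θ (insert t M) (insert t L) := by
  rw [tauCoeff_insert_insert θ ht fun h => ht (hLM h)]
  ring

/-- Consistency relation: `τ^M_L = τ^{M∪{t}}_L + τ^{M∪{t}}_{L∪{t}}` for every nonempty finite
`M ⊆ T`, nonempty `L ⊆ M` and `t ∈ T ∖ M`. -/
theorem tauCoeff_consistency {T : Type*} [DecidableEq T] (θ : Finset T → ℝ)
    (M L : Finset T) (hM : M.Nonempty) (hL : L.Nonempty) (hLM : L ⊆ M)
    (t : T) (ht : t ∉ M) :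
    tauCoeff θ M L = tauCoeff θ (insert t M) L + tauCoeff θ (insert t M) (insert t L) :=
  tauCoeff_consistency_general θ M L hLM t ht
end

section
/- If the consistency relation τ^M_L = τ^{M∪{t}}_L + τ^{M∪{t}}_{L∪{t}} holds for all admissible M, L, t, then for all nonempty finite M, all A ⊆ M and nonempty K ⊆ A: τ^A_K = ∑_{J ⊆ M∖A} τ^M_{K∪J}. -/
/-- Applying the consistency relation once for each point `t` of `D` splits every index set
`L` into `L` and `L ∪ {t}`; after all of `D` is added, the pieces are indexed by `J ⊆ D`. -/
theorem eq_sum_powerset_of_consistent {T β : Type*} [DecidableEq T] [AddCommMonoid β]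
    (τ : Finset T → Finset T → β)
    (hcons : ∀ (M L : Finset T) (t : T), M.Nonempty → L.Nonempty → L ⊆ M → t ∉ M →
      τ M L = τ (insert t M) L + τ (insert t M) (insert t L))
    (D : Finset T) {A K : Finset T} (hK : K.Nonempty) (hKA : K ⊆ A) (hAD : Disjoint A D) :
    τ A K = ∑ J ∈ D.powerset, τ (A ∪ D) (K ∪ J) := by
  induction D using Finset.induction_on generalizing A K with
  | empty => simp
  | @insert t D htD ih =>
    have htA : t ∉ A := Finset.disjoint_right.mp hAD (Finset.mem_insert_self t D)
    have hAD' : Disjoint (insert t A) D :=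
      Finset.disjoint_insert_left.mpr ⟨htD, (Finset.disjoint_insert_right.mp hAD).2⟩
    rw [hcons A K t (hK.mono hKA) hK hKA htA,
      ih hK (hKA.trans (Finset.subset_insert t A)) hAD',
      ih (Finset.insert_nonempty t K) (Finset.insert_subset_insert t hKA) hAD',
      Finset.sum_powerset_insert htD]
    simp only [Finset.insert_union, Finset.union_insert]

theorem tau_telescoping_general {T : Type*} [DecidableEq T] (τ : Finset T → Finset T → ℝ)
    (hcons : ∀ (M L : Finset T) (t : T), M.Nonempty → L.Nonempty → L ⊆ M → t ∉ M →
      τ M L = τ (insert t M) L + τ (insert t M) (insert t L))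
    (M A K : Finset T) (hAM : A ⊆ M) (hK : K.Nonempty) (hKA : K ⊆ A) :
    τ A K = ∑ J ∈ (M \ A).powerset, τ M (K ∪ J) := by
  rw [eq_sum_powerset_of_consistent τ hcons (M \ A) hK hKA Finset.disjoint_sdiff,
    Finset.union_sdiff_of_subset hAM]

/-- If the family `(τ^M_L)` satisfies the consistency relation
`τ^M_L = τ^{M∪{t}}_L + τ^{M∪{t}}_{L∪{t}}` for all admissible `M, L, t`, then for every
nonempty finite `M`, every `A ⊆ M` and every nonempty `K ⊆ A`:
`τ^A_K = ∑_{J ⊆ M∖A} τ^M_{K∪J}`. -/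
theorem tau_telescoping {T : Type*} [DecidableEq T] (τ : Finset T → Finset T → ℝ)
    (hcons : ∀ (M L : Finset T) (t : T), M.Nonempty → L.Nonempty → L ⊆ M → t ∉ M →
      τ M L = τ (insert t M) L + τ (insert t M) (insert t L))
    (M A K : Finset T) (hM : M.Nonempty) (hAM : A ⊆ M) (hK : K.Nonempty) (hKA : K ⊆ A) :
    τ A K = ∑ J ∈ (M \ A).powerset, τ M (K ∪ J) :=
  tau_telescoping_general τ hcons M A K hAM hK hKA
end

section
/- Given nonnegative coefficients (τ^M_L) satisfying the consistency relation and normalization τ^{{t}}_{{t}} = 1, the function on finite subsets defined by θ*(A) := ∑_{L ⊆ M : L ∩ A ≠ ∅} τ^M_L (for any finite M ⊇ A) is well-defined, i.e., independent of the choice of M containing A. -/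
/-!
Adding a point `t ∉ M` to `M` splits each `τ^M_L` into `τ^{M∪{t}}_L + τ^{M∪{t}}_{L∪{t}}`, and
since `t ∉ A` both `L` and `L ∪ {t}` meet `A` exactly when `L` does. So the sum is unchanged under
enlarging `M` one point at a time, and any two admissible `M₁, M₂` give the value at `M₁ ∪ M₂`.
-/

open Finset

section

variable {T β : Type*} [DecidableEq T] [AddCommMonoid β]

/-- `θ*(A)` computed inside the ambient set `M`. -/
def thetaStar (τ : Finset T → Finset T → β) (A M : Finset T) : β :=
  ∑ L ∈ M.powerset.filter (fun L => (L ∩ A).Nonempty), τ M L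

variable {τ : Finset T → Finset T → β}
  (hcons : ∀ (M L : Finset T) (t : T), M.Nonempty → L.Nonempty → L ⊆ M → t ∉ M →
    τ M L = τ (insert t M) L + τ (insert t M) (insert t L))
include hcons

theorem thetaStar_insert {A M : Finset T} (hAM : A ⊆ M) {t : T} (ht : t ∉ M) :
    thetaStar τ A (insert t M) = thetaStar τ A M := by
  have htA : t ∉ A := fun h => ht (hAM h)
  rw [thetaStar, thetaStar, sum_filter, sum_filter, sum_powerset_insert ht,
    ← sum_add_distrib]
  refine sum_congr rfl fun L hL => ?_
  rw [insert_inter_of_notMem htA]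
  split_ifs with hLA
  · have hL : L ⊆ M := mem_powerset.mp hL
    have hLne : L.Nonempty := hLA.mono inter_subset_left
    exact (hcons M L t (hLne.mono hL) hLne hL ht).symm
  · exact add_zero 0

theorem thetaStar_union {A M : Finset T} (hAM : A ⊆ M) (N : Finset T) :
    thetaStar τ A (M ∪ N) = thetaStar τ A M := by
  induction N using Finset.induction_on with
  | empty => rw [union_empty]
  | @insert t N _ ih =>
    rw [union_insert]
    by_cases htMN : t ∈ M ∪ N
    · rw [insert_eq_of_mem htMN, ih]
    · rw [thetaStar_insert hcons (hAM.trans subset_union_left) htMN, ih]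

end

theorem thetaStar_well_defined_general {T : Type*} [DecidableEq T] (τ : Finset T → Finset T → ℝ)
    (hcons : ∀ (M L : Finset T) (t : T), M.Nonempty → L.Nonempty → L ⊆ M → t ∉ M →
      τ M L = τ (insert t M) L + τ (insert t M) (insert t L))
    (A M₁ M₂ : Finset T) (h₁ : A ⊆ M₁) (h₂ : A ⊆ M₂) :
    ∑ L ∈ M₁.powerset.filter (fun L => (L ∩ A).Nonempty), τ M₁ L =
      ∑ L ∈ M₂.powerset.filter (fun L => (L ∩ A).Nonempty), τ M₂ L := by
  change thetaStar τ A M₁ = thetaStar τ A M₂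
  rw [← thetaStar_union hcons h₁ M₂, ← thetaStar_union hcons h₂ M₁, union_comm]

/-- Given nonnegative coefficients `(τ^M_L)` satisfying the consistency relation
`τ^M_L = τ^{M∪{t}}_L + τ^{M∪{t}}_{L∪{t}}` (`t ∉ M`) and the normalization `τ^{{t}}_{{t}} = 1`,
the value `θ*(A) = ∑_{L ⊆ M, L ∩ A ≠ ∅} τ^M_L` does not depend on the choice of the finite
set `M` containing `A`. -/
theorem thetaStar_well_defined {T : Type*} [DecidableEq T] (τ : Finset T → Finset T → ℝ)
    (hnn : ∀ M L : Finset T, 0 ≤ τ M L)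
    (hcons : ∀ (M L : Finset T) (t : T), M.Nonempty → L.Nonempty → L ⊆ M → t ∉ M →
      τ M L = τ (insert t M) L + τ (insert t M) (insert t L))
    (hnorm : ∀ t : T, τ {t} {t} = 1)
    (A M₁ M₂ : Finset T) (hA : A.Nonempty) (h₁ : A ⊆ M₁) (h₂ : A ⊆ M₂) :
    ∑ L ∈ M₁.powerset.filter (fun L => (L ∩ A).Nonempty), τ M₁ L =
      ∑ L ∈ M₂.powerset.filter (fun L => (L ∩ A).Nonempty), τ M₂ L :=
  thetaStar_well_defined_general τ hcons A M₁ M₂ h₁ h₂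
end

section
/- The function η(s,t) := θ({s,t}) − 1 derived from an extremal coefficient function θ satisfies the triangle inequality η(s,t) ≤ η(s,r) + η(r,t) for all s, t, r ∈ T. -/
/-!
Complete alternation gives monotonicity of `θ` (the case `n = 1`) and submodularity (`n = 2`).
Hence `θ {s, t} ≤ θ ({s, r} ∪ {r, t}) ≤ θ {s, r} + θ {r, t} - θ ({s, r} ∩ {r, t})`,
and the last term is at least `θ {r} = 1`.
-/

def CompletelyAlternating {T : Type*} [DecidableEq T] (ψ : Finset T → ℝ) : Prop :=
  ∀ (n : ℕ), 1 ≤ n → ∀ (K : Finset T) (Ks : Fin n → Finset T),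
    ∑ I : Finset (Fin n), (-1 : ℝ) ^ I.card * ψ (K ∪ I.sup Ks) ≤ 0

namespace CompletelyAlternating

variable {T : Type*} [DecidableEq T] {ψ : Finset T → ℝ}

theorem le_union (hψ : CompletelyAlternating ψ) (K L : Finset T) : ψ K ≤ ψ (K ∪ L) := by
  have h := hψ 1 le_rfl K ![L]
  rw [show (Finset.univ : Finset (Finset (Fin 1))) = {∅, {0}} by decide,
    Finset.sum_pair (by decide)] at h
  simp only [Finset.card_empty, Finset.card_singleton, Finset.sup_empty, Finset.sup_singleton,
    Finset.bot_eq_empty, Finset.union_empty, Matrix.cons_val_zero] at h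
  linarith

theorem monotone (hψ : CompletelyAlternating ψ) : Monotone ψ := fun K L hKL => by
  simpa [Finset.union_eq_right.mpr hKL] using hψ.le_union K L

theorem union_union_add_le (hψ : CompletelyAlternating ψ) (K A B : Finset T) :
    ψ (K ∪ (A ∪ B)) + ψ K ≤ ψ (K ∪ A) + ψ (K ∪ B) := by
  have h := hψ 2 (by norm_num) K ![A, B]
  rw [show (Finset.univ : Finset (Finset (Fin 2))) = {∅, {0}, {1}, {0, 1}} by decide,
    Finset.sum_insert (by decide), Finset.sum_insert (by decide), Finset.sum_pair (by decide),
    show ({0, 1} : Finset (Fin 2)).card = 2 by decide] at h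
  simp only [Finset.card_empty, Finset.card_singleton, Finset.sup_empty, Finset.sup_singleton,
    Finset.sup_insert, Finset.bot_eq_empty, Finset.union_empty, Matrix.cons_val_zero,
    Matrix.cons_val_one, Finset.sup_eq_union] at h
  linarith

theorem union_add_inter_le (hψ : CompletelyAlternating ψ) (A B : Finset T) :
    ψ (A ∪ B) + ψ (A ∩ B) ≤ ψ A + ψ B := by
  simpa [Finset.union_eq_right.mpr Finset.inter_subset_left,
    Finset.union_eq_right.mpr Finset.inter_subset_right,
    Finset.union_eq_right.mpr (Finset.inter_subset_left.trans Finset.subset_union_left)]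
    using hψ.union_union_add_le (A ∩ B) A B

end CompletelyAlternating

theorem eta_triangle_inequality_general {T : Type*} [DecidableEq T]
    (θ : Finset T → ℝ) (hCA : CompletelyAlternating θ)
    (h1 : ∀ t : T, θ {t} = 1)
    (s t r : T) :
    θ {s, t} - 1 ≤ (θ {s, r} - 1) + (θ {r, t} - 1) := by
  have hst : θ {s, t} ≤ θ ({s, r} ∪ {r, t}) :=
    hCA.monotone (by intro x; simp only [Finset.mem_insert, Finset.mem_union,
      Finset.mem_singleton]; tauto)
  have hr : θ {r} ≤ θ ({s, r} ∩ {r, t}) :=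
    hCA.monotone (by simp [Finset.subset_iff])
  linarith [hCA.union_add_inter_le {s, r} {r, t}, h1 r]

/-- The function `η(s,t) := θ({s,t}) − 1` derived from an extremal coefficient function `θ`
satisfies the triangle inequality `η(s,t) ≤ η(s,r) + η(r,t)` for all `s, t, r ∈ T`. -/
theorem eta_triangle_inequality {T : Type*} [DecidableEq T]
    (θ : Finset T → ℝ) (hCA : CompletelyAlternating θ)
    (h0 : θ ∅ = 0) (h1 : ∀ t : T, θ {t} = 1)
    (s t r : T) :
    θ {s, t} - 1 ≤ (θ {s, r} - 1) + (θ {r, t} - 1) :=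
  eta_triangle_inequality_general θ hCA h1 s t r
end

section
/- For the max-linear model with nonnegative coefficients (τ^M_L)_{∅≠L⊆M} realizing extremal coefficients θ(A) = ∑_{L⊆M : L∩A≠∅} τ^M_L, the dependency set equals the polytope {x ∈ [0,∞)^M : ⟨x, 1_L⟩ ≤ θ(L) for all nonempty L ⊆ M}; in particular for every x ∈ [0,∞)^M with coordinates ordered x_{t_1} ≥ ⋯ ≥ x_{t_m}, and every y in the polytope, ⟨x,y⟩ ≤ ∑_{i=1}^m x_{t_i} (θ({t_1,…,t_i}) − θ({t_1,…,t_{i−1}})). -/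
/-!
For `x` decreasing, summation by parts writes `⟨x, y⟩` as a nonnegative combination of the
partial sums `∑_{j ≤ i} y_j`, each at most `θ(Iic i)`; this bounds `⟨x, y⟩` by
`∑ᵢ xᵢ (θ(Iic i) - θ(Iio i))`. The increment `θ(Iic i) - θ(Iio i)` is the total weight of the
sets `J` whose least element is `i`. Since those sets meet every `L` containing `i`, the vector of
increments lies in the polytope, and its pairing with `x` is `∑_J τ_J x_{min J} = ℓ(x)`.
A general `x` is sorted by relabelling `M`, which leaves the model invariant.
-/

/-- `θ(A) = ∑_{L ⊆ M, L ∩ A ≠ ∅} τ^M_L` for the max-linear model on `M = Fin m`. -/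
def thetaML (m : ℕ) (τ : Finset (Fin m) → ℝ) (A : Finset (Fin m)) : ℝ :=
  ∑ L ∈ Finset.univ.powerset.filter (fun L => (L ∩ A).Nonempty), τ L

/-- The stable tail dependence function of the max-linear model:
`ℓ(x) = ∑_{∅ ≠ L ⊆ M} τ^M_L · max_{t ∈ L} x_t`. -/
def ellML (m : ℕ) (τ : Finset (Fin m) → ℝ) (x : Fin m → ℝ) : ℝ :=
  ∑ L : Finset (Fin m), if h : L.Nonempty then τ L * L.sup' h x else 0

/-- The polytope `{x ≥ 0 : ⟨x, 1_L⟩ ≤ θ(L) for all nonempty L ⊆ M}`. -/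
def polytopeML (m : ℕ) (τ : Finset (Fin m) → ℝ) : Set (Fin m → ℝ) :=
  {y | (∀ i, 0 ≤ y i) ∧ ∀ L : Finset (Fin m), L.Nonempty → ∑ i ∈ L, y i ≤ thetaML m τ L}

open Finset

theorem Finset.sum_mul_nonneg_of_antitoneOn {ι R : Type*} [LinearOrder ι] [CommRing R]
    [LinearOrder R] [IsOrderedRing R] {s : Finset ι} {a d : ι → R}
    (ha : AntitoneOn a s) (ha₀ : ∀ i ∈ s, 0 ≤ a i)
    (hd : ∀ i ∈ s, 0 ≤ ∑ j ∈ s with j ≤ i, d j) :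
    0 ≤ ∑ i ∈ s, a i * d i := by
  classical
  induction s using Finset.induction_on_max generalizing a with
  | empty => simp
  | insert M s hM ih =>
    have hMs : M ∉ s := fun h => lt_irrefl M (hM M h)
    have hfilter : ∀ i ∈ s, ({j ∈ insert M s | j ≤ i} : Finset ι) = {j ∈ s | j ≤ i} := by
      intro i hi
      rw [filter_insert, if_neg (not_le.2 (hM i hi))]
    have hsplit : ∑ i ∈ insert M s, a i * d i
        = ∑ i ∈ s, (a i - a M) * d i + a M * ∑ j ∈ insert M s with j ≤ M, d j := by
      have : ({j ∈ insert M s | j ≤ M} : Finset ι) = insert M s :=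
        filter_true_of_mem fun j hj => (mem_insert.1 hj).elim le_of_eq fun h => (hM j h).le
      rw [this, sum_insert hMs, sum_insert hMs, mul_add, mul_sum]
      simp only [sub_mul, sum_sub_distrib]
      ring
    rw [hsplit]
    refine add_nonneg (ih ?_ ?_ ?_) (mul_nonneg (ha₀ M (mem_insert_self M s))
      (hd M (mem_insert_self M s)))
    · intro i hi j hj hij
      exact sub_le_sub_right (ha (mem_insert_of_mem hi) (mem_insert_of_mem hj) hij) _
    · intro i hi
      exact sub_nonneg.2 (ha (mem_insert_of_mem hi) (mem_insert_self M s) (hM i hi).le)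
    · intro i hi
      rw [← hfilter i hi]
      exact hd i (mem_insert_of_mem hi)

section SetsWithLeast

variable {ι : Type*} [Fintype ι] [LinearOrder ι]

open Classical in
noncomputable def setsWithLeast (i : ι) : Finset (Finset ι) :=
  {J | IsLeast (J : Set ι) i}

@[simp]
theorem mem_setsWithLeast {i : ι} {J : Finset ι} :
    J ∈ setsWithLeast i ↔ IsLeast (J : Set ι) i := by
  simp [setsWithLeast]

theorem pairwiseDisjoint_setsWithLeast (s : Set ι) : s.PairwiseDisjoint setsWithLeast :=
  fun _ _ _ _ hne => disjoint_left.2 fun _ hi hj =>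
    hne ((mem_setsWithLeast.1 hi).unique (mem_setsWithLeast.1 hj))

theorem biUnion_setsWithLeast_subset (L : Finset ι) :
    L.biUnion setsWithLeast ⊆ ({J | (J ∩ L).Nonempty} : Finset (Finset ι)) := by
  intro J hJ
  obtain ⟨i, hiL, hJ⟩ := mem_biUnion.1 hJ
  exact mem_filter.2 ⟨mem_univ J, i, mem_inter.2 ⟨(mem_setsWithLeast.1 hJ).1, hiL⟩⟩

theorem biUnion_setsWithLeast_of_isLowerSet {L : Finset ι} (hL : IsLowerSet (L : Set ι)) :
    L.biUnion setsWithLeast = ({J | (J ∩ L).Nonempty} : Finset (Finset ι)) := by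
  refine (biUnion_setsWithLeast_subset L).antisymm fun J hJ => ?_
  obtain ⟨j, hj⟩ := (mem_filter.1 hJ).2
  have hJne : J.Nonempty := ⟨j, (mem_inter.1 hj).1⟩
  have hleast := J.isLeast_min' hJne
  exact mem_biUnion.2 ⟨J.min' hJne, hL (hleast.2 (mem_inter.1 hj).1) (mem_inter.1 hj).2,
    mem_setsWithLeast.2 hleast⟩

end SetsWithLeast

section MaxLinear

variable {m : ℕ} {τ : Finset (Fin m) → ℝ}

theorem thetaML_eq_sum_filter (τ : Finset (Fin m) → ℝ) (A : Finset (Fin m)) :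
    thetaML m τ A = ∑ J with (J ∩ A).Nonempty, τ J := by
  rw [thetaML, powerset_univ]

def greedyVertex (τ : Finset (Fin m) → ℝ) (i : Fin m) : ℝ :=
  thetaML m τ (Iic i) - thetaML m τ (Iio i)

theorem greedyVertex_eq_sum_setsWithLeast (τ : Finset (Fin m) → ℝ) (i : Fin m) :
    greedyVertex τ i = ∑ J ∈ setsWithLeast i, τ J := by
  have hsub : ({J | (J ∩ Iio i).Nonempty} : Finset (Finset (Fin m))) ⊆
      ({J | (J ∩ Iic i).Nonempty} : Finset (Finset (Fin m))) :=
    monotone_filter_right _ fun J _ => Nonempty.mono (inter_subset_inter_left Iio_subset_Iic_self)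
  rw [greedyVertex, thetaML_eq_sum_filter, thetaML_eq_sum_filter, ← sum_sdiff_eq_sub hsub]
  congr 1
  ext J
  simp only [mem_sdiff, mem_filter, mem_univ, true_and, mem_setsWithLeast, IsLeast, lowerBounds,
    Finset.Nonempty, mem_inter, mem_Iic, mem_Iio, mem_coe, not_exists, not_and, not_lt]
  constructor
  · rintro ⟨⟨j, hjJ, hji⟩, hlb⟩
    exact ⟨le_antisymm hji (hlb j hjJ) ▸ hjJ, fun k hk => hlb k hk⟩
  · rintro ⟨hiJ, hlb⟩
    exact ⟨⟨i, hiJ, le_rfl⟩, fun k hk => hlb hk⟩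

theorem sum_greedyVertex (τ : Finset (Fin m) → ℝ) (L : Finset (Fin m)) :
    ∑ i ∈ L, greedyVertex τ i = ∑ J ∈ L.biUnion setsWithLeast, τ J := by
  simp_rw [greedyVertex_eq_sum_setsWithLeast]
  exact (sum_biUnion (pairwiseDisjoint_setsWithLeast _)).symm

theorem sum_greedyVertex_le (hτ : ∀ L : Finset (Fin m), L.Nonempty → 0 ≤ τ L)
    (L : Finset (Fin m)) : ∑ i ∈ L, greedyVertex τ i ≤ thetaML m τ L := by
  rw [sum_greedyVertex, thetaML_eq_sum_filter]
  refine sum_le_sum_of_subset_of_nonneg (biUnion_setsWithLeast_subset L) fun J hJ _ => hτ J ?_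
  obtain ⟨j, hj⟩ := (mem_filter.1 hJ).2
  exact ⟨j, (mem_inter.1 hj).1⟩

theorem sum_Iic_greedyVertex (τ : Finset (Fin m) → ℝ) (k : Fin m) :
    ∑ i ∈ Iic k, greedyVertex τ i = thetaML m τ (Iic k) := by
  rw [sum_greedyVertex, biUnion_setsWithLeast_of_isLowerSet (by simpa using isLowerSet_Iic k),
    thetaML_eq_sum_filter]

theorem greedyVertex_mem_polytopeML (hτ : ∀ L : Finset (Fin m), L.Nonempty → 0 ≤ τ L) :
    greedyVertex τ ∈ polytopeML m τ := by
  refine ⟨fun i => ?_, fun L _ => sum_greedyVertex_le hτ L⟩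
  rw [greedyVertex_eq_sum_setsWithLeast]
  exact sum_nonneg fun J hJ => hτ J ⟨i, (mem_setsWithLeast.1 hJ).1⟩

theorem inner_le_inner_greedyVertex {x y : Fin m → ℝ} (hx : Antitone x) (hx₀ : ∀ i, 0 ≤ x i)
    (hy : y ∈ polytopeML m τ) : ∑ i, x i * y i ≤ ∑ i, x i * greedyVertex τ i := by
  have := sum_mul_nonneg_of_antitoneOn (s := univ) (d := fun i => greedyVertex τ i - y i)
    (hx.antitoneOn _) (fun i _ => hx₀ i) fun i _ => by
      rw [filter_ge_eq_Iic, sum_sub_distrib, sum_Iic_greedyVertex, sub_nonneg]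
      exact hy.2 _ nonempty_Iic
  simpa [mul_sub, sum_sub_distrib] using this

theorem ellML_eq_inner_greedyVertex (τ : Finset (Fin m) → ℝ) {x : Fin m → ℝ} (hx : Antitone x) :
    ellML m τ x = ∑ i, x i * greedyVertex τ i := by
  set f : Finset (Fin m) → ℝ := fun J => if h : J.Nonempty then τ J * J.sup' h x else 0
  have hf : ∀ i, ∀ J ∈ setsWithLeast i, x i * τ J = f J := by
    intro i J hJ
    have hleast := mem_setsWithLeast.1 hJ
    have hsup : J.sup' ⟨i, hleast.1⟩ x = x i :=
      le_antisymm (sup'_le _ _ fun j hj => hx (hleast.2 hj)) (le_sup' x hleast.1)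
    simp only [f]
    rw [dif_pos ⟨i, hleast.1⟩, hsup, mul_comm]
  calc ellML m τ x = ∑ J, f J := rfl
    _ = ∑ J ∈ univ.biUnion setsWithLeast, f J := by
      rw [biUnion_setsWithLeast_of_isLowerSet (by simpa using isLowerSet_univ)]
      refine (sum_filter_of_ne fun J _ hJ => ?_).symm
      rw [inter_univ]
      by_contra hne
      exact hJ (dif_neg hne)
    _ = ∑ i, ∑ J ∈ setsWithLeast i, x i * τ J := by
      rw [sum_biUnion (pairwiseDisjoint_setsWithLeast _)]
      exact sum_congr rfl fun i _ => sum_congr rfl fun J hJ => (hf i J hJ).symm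
    _ = ∑ i, x i * greedyVertex τ i := by simp_rw [greedyVertex_eq_sum_setsWithLeast, mul_sum]

section Relabel

variable (σ : Equiv.Perm (Fin m))

theorem thetaML_map_perm (τ : Finset (Fin m) → ℝ) (A : Finset (Fin m)) :
    thetaML m (fun J => τ (J.map σ.toEmbedding)) A = thetaML m τ (A.map σ.toEmbedding) := by
  rw [thetaML_eq_sum_filter, thetaML_eq_sum_filter, sum_filter, sum_filter]
  refine Fintype.sum_equiv σ.finsetCongr _ _ fun J => ?_
  simp only [Equiv.finsetCongr_apply, ← map_inter, map_nonempty]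

theorem ellML_map_perm (τ : Finset (Fin m) → ℝ) (x : Fin m → ℝ) :
    ellML m (fun J => τ (J.map σ.toEmbedding)) (x ∘ σ) = ellML m τ x := by
  refine Fintype.sum_equiv σ.finsetCongr _ _ fun J => ?_
  by_cases hJ : J.Nonempty
  · simp [hJ, sup'_map]
  · simp [hJ]

theorem comp_mem_polytopeML_map_perm_iff {y : Fin m → ℝ} :
    y ∘ σ ∈ polytopeML m (fun J => τ (J.map σ.toEmbedding)) ↔ y ∈ polytopeML m τ := by
  simp only [polytopeML, Set.mem_ofPred_eq, Function.comp_apply, thetaML_map_perm]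
  refine and_congr ⟨fun h i => by simpa using h (σ.symm i), fun h i => h (σ i)⟩
    ⟨fun h L hL => ?_, fun h L hL => by simpa [sum_map] using h (L.map σ.toEmbedding) hL.map⟩
  have hσL : (L.map σ.symm.toEmbedding).map σ.toEmbedding = L := by ext; simp
  simpa [sum_map, hσL] using h (L.map σ.symm.toEmbedding) hL.map

theorem setOf_inner_polytopeML_map_perm (τ : Finset (Fin m) → ℝ) (x : Fin m → ℝ) :
    {r : ℝ | ∃ y ∈ polytopeML m (fun J => τ (J.map σ.toEmbedding)), r = ∑ i, (x ∘ σ) i * y i} =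
      {r : ℝ | ∃ y ∈ polytopeML m τ, r = ∑ i, x i * y i} := by
  ext r
  constructor
  · rintro ⟨y, hy, rfl⟩
    refine ⟨y ∘ σ.symm, (comp_mem_polytopeML_map_perm_iff σ).1 (by simpa [Function.comp_def]), ?_⟩
    exact (Equiv.sum_comp σ.symm _).symm.trans (by simp)
  · rintro ⟨y, hy, rfl⟩
    exact ⟨y ∘ σ, (comp_mem_polytopeML_map_perm_iff σ).2 hy, (Equiv.sum_comp σ _).symm⟩

end Relabel

theorem isLUB_ellML (hτ : ∀ L : Finset (Fin m), L.Nonempty → 0 ≤ τ L) {x : Fin m → ℝ}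
    (hx₀ : ∀ i, 0 ≤ x i) :
    IsLUB {r : ℝ | ∃ y ∈ polytopeML m τ, r = ∑ i, x i * y i} (ellML m τ x) := by
  set σ := Tuple.sort (OrderDual.toDual ∘ x)
  have hσ : Antitone (x ∘ σ) := monotone_toDual_comp_iff.1 (Tuple.monotone_sort _)
  rw [← ellML_map_perm σ, ← setOf_inner_polytopeML_map_perm σ,
    ellML_eq_inner_greedyVertex _ hσ]
  refine IsGreatest.isLUB ⟨⟨greedyVertex _, greedyVertex_mem_polytopeML ?_, rfl⟩, ?_⟩
  · exact fun L hL => hτ _ hL.map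
  · rintro _ ⟨y, hy, rfl⟩
    exact inner_le_inner_greedyVertex hσ (fun i => hx₀ _) hy

end MaxLinear

/-- For the max-linear model with nonnegative coefficients `(τ^M_L)`, the dependency set
equals the polytope `{x ≥ 0 : ⟨x, 1_L⟩ ≤ θ(L), ∅ ≠ L ⊆ M}`, i.e. the support function of the
polytope on the nonnegative orthant is the stable tail dependence function `ℓ_M`; in
particular, for every `x ≥ 0` with decreasingly ordered coordinates and every `y` in the
polytope, `⟨x,y⟩ ≤ ∑ᵢ x_{tᵢ}(θ({t₁,…,tᵢ}) − θ({t₁,…,t_{i−1}}))`. -/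
theorem maxlinear_dependency_set_eq_polytope (m : ℕ) (τ : Finset (Fin m) → ℝ)
    (hτ : ∀ L : Finset (Fin m), L.Nonempty → 0 ≤ τ L) :
    (∀ x : Fin m → ℝ, (∀ i, 0 ≤ x i) →
      IsLUB {r : ℝ | ∃ y ∈ polytopeML m τ, r = ∑ i, x i * y i} (ellML m τ x)) ∧
    (∀ x : Fin m → ℝ, (∀ i, 0 ≤ x i) → (∀ i j : Fin m, i ≤ j → x j ≤ x i) →
      ∀ y ∈ polytopeML m τ,
        ∑ i, x i * y i ≤
          ∑ i, x i * (thetaML m τ (Finset.Iic i) - thetaML m τ (Finset.Iio i))) :=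
  ⟨fun _ hx₀ => isLUB_ellML hτ hx₀, fun _ hx₀ hx _ hy => inner_le_inner_greedyVertex hx hx₀ hy⟩
end

section
/- The semigroup of bounded semicharacters on F(M), for M a finite set, is isomorphic to (F(M), ∪, ∅) via ρ ↦ ⋂_{L ∈ ρ^{-1}(1)} (M ∖ L). -/
/-- A bounded semicharacter on `(F(M), ∪, ∅)`: `ρ : F(M) → {0,1}` with `ρ(∅) = 1` and
`ρ(A ∪ B) = ρ(A)ρ(B)`. -/
def Semicharacter (ι : Type*) [DecidableEq ι] :=
  {ρ : Finset ι → Bool // ρ ∅ = true ∧ ∀ A B : Finset ι, ρ (A ∪ B) = (ρ A && ρ B)}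

/-- The map `ρ ↦ ⋂_{L ∈ ρ⁻¹(1)} (M ∖ L)`. -/
def semicharToSet {ι : Type*} [Fintype ι] [DecidableEq ι] (ρ : Semicharacter ι) :
    Finset ι :=
  Finset.univ.filter fun t => ∀ L : Finset ι, ρ.1 L = true → t ∉ L

/-!
Since every finite set is the union of its singletons, `ρ(A) = ∏_{t ∈ A} ρ({t})`, so a
semicharacter is the same thing as an arbitrary choice of values `ρ({t}) ∈ {0,1}`, i.e. as the
set `{t | ρ({t}) = 0}`. This set is exactly `⋂_{ρ(L) = 1} (M ∖ L)`, and pointwise products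
of semicharacters correspond to unions of these sets.
-/

namespace Semicharacter

variable {ι : Type*} [DecidableEq ι]

theorem apply_eq_true_iff (ρ : Semicharacter ι) (A : Finset ι) :
    ρ.1 A = true ↔ ∀ t ∈ A, ρ.1 {t} = true := by
  induction A using Finset.induction_on with
  | empty => simp [ρ.2.1]
  | insert a A _ ih =>
    rw [Finset.forall_mem_insert, ← ih, Finset.insert_eq, ρ.2.2, Bool.and_eq_true]

theorem ext_of_apply_singleton {ρ σ : Semicharacter ι} (h : ∀ t, ρ.1 {t} = σ.1 {t}) :
    ρ = σ :=
  Subtype.ext <| funext fun A => Bool.eq_iff_iff.2 <| by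
    rw [apply_eq_true_iff ρ, apply_eq_true_iff σ]
    simp only [h]

def avoiding (S : Finset ι) : Semicharacter ι :=
  ⟨fun A => decide (Disjoint A S), by simp, fun A B => by simp [Finset.disjoint_union_left]⟩

theorem avoiding_apply_singleton (S : Finset ι) (t : ι) :
    (avoiding S).1 {t} = !decide (t ∈ S) := by
  simp [avoiding]

variable [Fintype ι]

theorem mem_semicharToSet {ρ : Semicharacter ι} {t : ι} :
    t ∈ semicharToSet ρ ↔ ρ.1 {t} = false := by
  simp only [semicharToSet, Finset.mem_filter, Finset.mem_univ, true_and]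
  constructor
  · intro h
    simpa using mt (h {t}) (by simp)
  · intro h L hL htL
    simp [(apply_eq_true_iff ρ L).1 hL t htL] at h

theorem semicharToSet_avoiding (S : Finset ι) : semicharToSet (avoiding S) = S := by
  ext t
  simp [mem_semicharToSet, avoiding_apply_singleton]

theorem semicharToSet_injective : Function.Injective (semicharToSet (ι := ι)) := by
  intro ρ σ h
  refine ext_of_apply_singleton fun t => ?_
  have hmem : t ∈ semicharToSet ρ ↔ t ∈ semicharToSet σ := by rw [h]
  rw [mem_semicharToSet, mem_semicharToSet] at hmem
  exact Bool.eq_iff_iff.2 (by simpa using hmem)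

theorem semicharToSet_surjective : Function.Surjective (semicharToSet (ι := ι)) :=
  fun S => ⟨avoiding S, semicharToSet_avoiding S⟩

theorem semicharToSet_of_apply_eq_and {ρ σ π : Semicharacter ι}
    (h : ∀ A, π.1 A = (ρ.1 A && σ.1 A)) :
    semicharToSet π = semicharToSet ρ ∪ semicharToSet σ := by
  ext t
  rw [Finset.mem_union, mem_semicharToSet, mem_semicharToSet, mem_semicharToSet, h,
    Bool.and_eq_false_iff]

theorem semicharToSet_of_forall_apply_eq_true {e : Semicharacter ι} (h : ∀ A, e.1 A = true) :
    semicharToSet e = ∅ := by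
  ext t
  simp [mem_semicharToSet, h]

end Semicharacter

/-- For a finite set `M`, the semigroup of bounded semicharacters on `F(M)` (under pointwise
multiplication, with neutral element the constant function `1`) is isomorphic to
`(F(M), ∪, ∅)` via `ρ ↦ ⋂_{L ∈ ρ⁻¹(1)} (M ∖ L)`: this map is bijective, sends pointwise
products to unions, and sends the constant semicharacter `1` to `∅`. -/
theorem semicharacters_iso_powerset {ι : Type*} [Fintype ι] [DecidableEq ι] :
    Function.Bijective (semicharToSet (ι := ι)) ∧
      (∀ ρ σ π : Semicharacter ι, (∀ A : Finset ι, π.1 A = (ρ.1 A && σ.1 A)) →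
        semicharToSet π = semicharToSet ρ ∪ semicharToSet σ) ∧
      (∀ e : Semicharacter ι, (∀ A : Finset ι, e.1 A = true) → semicharToSet e = ∅) :=
  ⟨⟨Semicharacter.semicharToSet_injective, Semicharacter.semicharToSet_surjective⟩,
    fun _ _ _ => Semicharacter.semicharToSet_of_apply_eq_and,
    fun _ => Semicharacter.semicharToSet_of_forall_apply_eq_true⟩
end
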